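/- In any algebra (S,*,') satisfying the three axioms, the identity x * x''' = x * x' holds for all x in S. -/

import Mathlib

/-!
Put `e = x′′′ * x`. Axiom (E2) lets `x * e = x` be obtained from `x * (x′ * x) = x`,
while `e * x′′′ = x′′′`; hence, by (E3), `x * x′′′ = x * (e * x′′′) = (x * e) * x′ = x * x′`.
-/

section

variable {S : Type*} {m : S → S → S} {i : S → S}

local infixl:70 " ⋆ " => m
local postfix:max "′" => i

variable (m i) in
/-- Axioms (E1) and (E3). -/
structure IsTwistedRegular : Prop where
  mul_prime_mul : ∀ x, x ⋆ x′ ⋆ x = x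
  mul_mul : ∀ x y z, x ⋆ y ⋆ z = x ⋆ (y ⋆ z′′)

namespace IsTwistedRegular

theorem prime_mul_prime_prime (h : IsTwistedRegular m i) (x : S) : x′ ⋆ x′′ = x′ ⋆ x := by
  have h₁ : x′ ⋆ (x′′ ⋆ x′′′) = x′ := by rw [← h.mul_mul, h.mul_prime_mul]
  calc x′ ⋆ x′′ = x′ ⋆ (x′′ ⋆ x′′′ ⋆ x′′) := by rw [h.mul_prime_mul]
    _ = x′ ⋆ x := by rw [← h.mul_mul, h₁]

theorem mul_prime_mul_self (h : IsTwistedRegular m i) (x : S) : x ⋆ (x′ ⋆ x) = x := by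
  rw [← h.prime_mul_prime_prime, ← h.mul_mul, h.mul_prime_mul]

theorem mul_prime_mul_assoc (h : IsTwistedRegular m i) (x y : S) : x ⋆ y′ ⋆ y = x ⋆ (y′ ⋆ y) := by
  rw [h.mul_mul, h.prime_mul_prime_prime]

theorem prime_mul_self_mul_prime (h : IsTwistedRegular m i) (x : S) : x′ ⋆ x ⋆ x′ = x′ := by
  rw [← h.prime_mul_prime_prime, h.mul_prime_mul]

theorem mul_prime_mul_mul_prime_prime (h : IsTwistedRegular m i) (x y : S) :
    x ⋆ x′ ⋆ (x ⋆ y′′) = x ⋆ y := by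
  rw [← h.mul_mul, h.mul_prime_mul]

theorem prime3_mul_prime2 (h : IsTwistedRegular m i) (x : S) : x′′′ ⋆ x′′ = x′′′ ⋆ x :=
  calc x′′′ ⋆ x′′ = x′′′ ⋆ x′′′′ ⋆ (x′′′ ⋆ x′′′′) := (h.mul_prime_mul_mul_prime_prime _ _).symm
    _ = x′′′ ⋆ x′′′′ ⋆ (x′′′ ⋆ x′′) := by rw [h.prime_mul_prime_prime x′′]
    _ = x′′′ ⋆ x := h.mul_prime_mul_mul_prime_prime _ _

theorem prime3_mul_prime4 (h : IsTwistedRegular m i) (x : S) : x′′′ ⋆ x′′′′ = x′′′ ⋆ x := by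
  rw [h.prime_mul_prime_prime x′′, h.prime3_mul_prime2]

theorem prime2_mul_prime_mul (h : IsTwistedRegular m i) (x : S) : x′′ ⋆ x′ ⋆ x = x′′ := by
  rw [← h.prime_mul_prime_prime x′, h.mul_mul, h.mul_prime_mul_self]

theorem prime3_mul_mul_prime (h : IsTwistedRegular m i) (x : S) : x′′′ ⋆ x ⋆ x′ = x′′′ := by
  rw [← h.prime3_mul_prime2, h.prime2_mul_prime_mul]

theorem prime3_mul_mul_prime_mul (h : IsTwistedRegular m i) (x : S) :
    x′′′ ⋆ x ⋆ (x′ ⋆ x) = x′′′ ⋆ x := by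
  rw [← h.mul_prime_mul_assoc, h.prime3_mul_mul_prime]

theorem prime3_mul_mul_prime3 (h : IsTwistedRegular m i) (x : S) : x′′′ ⋆ x ⋆ x′′′ = x′′′ := by
  rw [← h.prime3_mul_prime2, h.prime_mul_self_mul_prime]

theorem mul_prime3_mul (h : IsTwistedRegular m i)
    (hcomm : ∀ x y, x ⋆ x′ ⋆ (y′ ⋆ y) = y′ ⋆ y ⋆ (x ⋆ x′)) (x : S) : x ⋆ (x′′′ ⋆ x) = x :=
  calc x ⋆ (x′′′ ⋆ x) = x ⋆ (x′′′ ⋆ x′′′′ ⋆ (x′ ⋆ x)) := by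
        rw [h.prime3_mul_prime4, h.prime3_mul_mul_prime_mul]
    _ = x ⋆ (x′ ⋆ x ⋆ (x′′′ ⋆ x′′′′)) := by rw [hcomm x′′′ x]
    _ = x ⋆ (x′ ⋆ x ⋆ x′′′ ⋆ x′′) := by rw [h.mul_mul (x′ ⋆ x) x′′′ x′′]
    _ = x ⋆ (x′ ⋆ x ⋆ x′′′) ⋆ x := by rw [h.mul_mul x _ x]
    _ = x ⋆ (x′ ⋆ x) ⋆ x′ ⋆ x := by rw [h.mul_mul x (x′ ⋆ x) x′]
    _ = x := by rw [h.mul_prime_mul_self, h.mul_prime_mul]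

theorem mul_prime3 (h : IsTwistedRegular m i)
    (hcomm : ∀ x y, x ⋆ x′ ⋆ (y′ ⋆ y) = y′ ⋆ y ⋆ (x ⋆ x′)) (x : S) : x ⋆ x′′′ = x ⋆ x′ :=
  calc x ⋆ x′′′ = x ⋆ (x′′′ ⋆ x ⋆ x′′′) := by rw [h.prime3_mul_mul_prime3]
    _ = x ⋆ (x′′′ ⋆ x) ⋆ x′ := (h.mul_mul _ _ _).symm
    _ = x ⋆ x′ := by rw [h.mul_prime3_mul hcomm]

end IsTwistedRegular

end

theorem stmt (S : Type*) (m : S → S → S) (i : S → S)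
    (E1 : ∀ x, m (m x (i x)) x = x)
    (E2 : ∀ x y, m (m x (i x)) (m (i y) y) = m (m (i y) y) (m x (i x)))
    (E3 : ∀ x y z, m (m x y) z = m x (m y (i (i z)))) :
    ∀ x, m x (i (i (i x))) = m x (i x) :=
  IsTwistedRegular.mul_prime3 ⟨E1, E3⟩ E2
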